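/- arXiv:2012.12717 — 2 statements merged into one kernel-verified Lean document; each statement's English description precedes it below -/
import Mathlib

section
/- Let H = H₁ + H₂ where H₁ and H₂ are self-adjoint operators on a finite-dimensional complex inner product space ℋ = S ⊕ S^⊥ (S a nonzero subspace), H₁ vanishes on S, ⟨x, H₁ x⟩ ≥ J‖x‖² for every x ∈ S^⊥, K := ‖H₂‖, and J > 2K. Then for any δ ≥ 0 and any unit vector ψ with ⟨ψ, H ψ⟩ ≤ λmin(H) + δ, there exists a unit vector ψ' ∈ S such that |⟨ψ, ψ'⟩|² ≥ 1 − ((K + √(K² + δ(J − 2K))) / (J − 2K))². -/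
open scoped ComplexInnerProductSpace

/-!
Split `ψ = p + q` along `S ⊕ Sᗮ` and put `t = ‖q‖`. Since `H₁` kills `S`, the cross terms of
`⟪ψ, H ψ⟫` only see `H₂`, so `⟪ψ, H ψ⟫ ≥ λ‖p‖² - 2K‖p‖t + (J - K)t²` with `λ = λmin(H)`, and
`λ ≤ K` by testing `H` on a unit vector of `S`. With `⟪ψ, H ψ⟫ ≤ λ + δ` and `‖p‖² = 1 - t²`
this gives `(J - 2K)t² ≤ 2Kt + δ`, so `t` is at most the positive root
`(K + √(K² + δ(J - 2K)))/(J - 2K)`, while the normalised `p` has overlap `‖p‖² = 1 - t²` with `ψ`.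
-/

/-- The smallest eigenvalue of a self-adjoint operator on a finite-dimensional complex
inner product space, expressed as the infimum of the Rayleigh quotient over unit vectors. -/
noncomputable def lamMin {ℋ : Type*} [NormedAddCommGroup ℋ] [InnerProductSpace ℂ ℋ]
    (A : ℋ →L[ℂ] ℋ) : ℝ :=
  sInf {r : ℝ | ∃ x : ℋ, ‖x‖ = 1 ∧ r = (⟪x, A x⟫).re}

section InnerProduct

variable {𝕜 E : Type*} [RCLike 𝕜] [NormedAddCommGroup E] [InnerProductSpace 𝕜 E]

lemma abs_re_inner_apply_le (A : E →L[𝕜] E) (x y : E) :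
    |RCLike.re (inner 𝕜 x (A y))| ≤ ‖A‖ * ‖x‖ * ‖y‖ :=
  calc |RCLike.re (inner 𝕜 x (A y))| ≤ ‖inner 𝕜 x (A y)‖ := RCLike.abs_re_le_norm _
    _ ≤ ‖x‖ * ‖A y‖ := norm_inner_le_norm _ _
    _ ≤ ‖x‖ * (‖A‖ * ‖y‖) := by gcongr; exact A.le_opNorm y
    _ = ‖A‖ * ‖x‖ * ‖y‖ := by ring

lemma Submodule.exists_mem_norm_eq_one {S : Submodule 𝕜 E} (hS : S ≠ ⊥) :
    ∃ e ∈ S, ‖e‖ = 1 := by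
  obtain ⟨v, hvS, hv₀⟩ := (Submodule.ne_bot_iff S).mp hS
  exact ⟨(‖v‖⁻¹ : 𝕜) • v, S.smul_mem _ hvS, norm_smul_inv_norm hv₀⟩

lemma Submodule.exists_mem_norm_eq_one_norm_inner_eq {S : Submodule 𝕜 E} (hS : S ≠ ⊥) {p : E}
    (hp : p ∈ S) : ∃ φ ∈ S, ‖φ‖ = 1 ∧ ‖inner 𝕜 p φ‖ = ‖p‖ := by
  rcases eq_or_ne p 0 with rfl | hp₀
  · obtain ⟨e, heS, he⟩ := S.exists_mem_norm_eq_one hS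
    exact ⟨e, heS, he, by simp⟩
  · refine ⟨(‖p‖⁻¹ : 𝕜) • p, S.smul_mem _ hp, norm_smul_inv_norm hp₀, ?_⟩
    rw [inner_smul_right, inner_self_eq_norm_sq_to_K, norm_mul, norm_inv, norm_pow]
    simp only [RCLike.norm_ofReal, abs_norm]
    field_simp [norm_ne_zero_iff.mpr hp₀]

end InnerProduct

section LamMin

variable {ℋ : Type*} [NormedAddCommGroup ℋ] [InnerProductSpace ℂ ℋ]

lemma bddBelow_re_inner_apply_sphere (A : ℋ →L[ℂ] ℋ) :
    BddBelow {r : ℝ | ∃ x : ℋ, ‖x‖ = 1 ∧ r = (⟪x, A x⟫).re} := by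
  refine ⟨-‖A‖, ?_⟩
  rintro r ⟨x, hx, rfl⟩
  have := abs_le.mp (abs_re_inner_apply_le A x x)
  simp only [hx, mul_one] at this
  exact this.1

lemma lamMin_le_re_inner (A : ℋ →L[ℂ] ℋ) {x : ℋ} (hx : ‖x‖ = 1) :
    lamMin A ≤ (⟪x, A x⟫).re :=
  csInf_le (bddBelow_re_inner_apply_sphere A) ⟨x, hx, rfl⟩

lemma lamMin_mul_norm_sq_le (A : ℋ →L[ℂ] ℋ) (x : ℋ) :
    lamMin A * ‖x‖ ^ 2 ≤ (⟪x, A x⟫).re := by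
  rcases eq_or_ne x 0 with rfl | hx
  · simp
  have h := lamMin_le_re_inner A (norm_smul_inv_norm (𝕜 := ℂ) hx)
  rw [map_smul, inner_smul_left, inner_smul_right, ← mul_assoc, ← RCLike.ofReal_inv,
    RCLike.conj_ofReal, ← RCLike.ofReal_mul, ← RCLike.re_to_complex, RCLike.re_ofReal_mul] at h
  calc lamMin A * ‖x‖ ^ 2 ≤ ‖x‖⁻¹ * ‖x‖⁻¹ * (⟪x, A x⟫).re * ‖x‖ ^ 2 := by gcongr; exact h
    _ = (⟪x, A x⟫).re := by field_simp

end LamMin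

lemma le_add_sqrt_div_of_mul_sq_le {a b δ t : ℝ} (ha : 0 < a) (h : a * t ^ 2 ≤ 2 * b * t + δ) :
    t ≤ (b + √(b ^ 2 + δ * a)) / a := by
  have hsq : (a * t - b) ^ 2 ≤ b ^ 2 + δ * a := by nlinarith
  rw [le_div_iff₀ ha]
  linarith [le_abs_self (a * t - b), Real.abs_le_sqrt hsq]

section ProjectionLemma

variable {ℋ : Type*} [NormedAddCommGroup ℋ] [InnerProductSpace ℂ ℋ] {H₁ H₂ : ℋ →L[ℂ] ℋ}
  {S : Submodule ℂ ℋ}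

lemma lamMin_add_le_norm (hS : S ≠ ⊥) (hvanish : ∀ x ∈ S, H₁ x = 0) :
    lamMin (H₁ + H₂) ≤ ‖H₂‖ := by
  obtain ⟨e, heS, he⟩ := S.exists_mem_norm_eq_one (𝕜 := ℂ) hS
  have hH₂e := (abs_le.mp (abs_re_inner_apply_le H₂ e e)).2
  calc lamMin (H₁ + H₂) ≤ (⟪e, (H₁ + H₂) e⟫).re := lamMin_le_re_inner _ he
    _ = (⟪e, H₂ e⟫).re := by simp [hvanish e heS]
    _ ≤ ‖H₂‖ := by simpa [he] using hH₂e

lemma lamMin_mul_sq_sub_le_re_inner_add [CompleteSpace ℋ] (hH₁ : IsSelfAdjoint H₁)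
    (hvanish : ∀ x ∈ S, H₁ x = 0) {J : ℝ} (hgap : ∀ x ∈ Sᗮ, J * ‖x‖ ^ 2 ≤ (⟪x, H₁ x⟫).re)
    {p q : ℋ} (hp : p ∈ S) (hq : q ∈ Sᗮ) :
    lamMin (H₁ + H₂) * ‖p‖ ^ 2 - 2 * ‖H₂‖ * ‖p‖ * ‖q‖ + (J - ‖H₂‖) * ‖q‖ ^ 2 ≤
      (⟪p + q, (H₁ + H₂) (p + q)⟫).re := by
  have hH₁pq : ⟪p, H₁ q⟫ = 0 :=
    calc ⟪p, H₁ q⟫ = ⟪H₁ p, q⟫ := (hH₁.isSymmetric p q).symm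
      _ = 0 := by rw [hvanish p hp, inner_zero_left]
  have hexpand : (⟪p + q, (H₁ + H₂) (p + q)⟫).re = (⟪p, (H₁ + H₂) p⟫).re + (⟪p, H₂ q⟫).re +
      (⟪q, H₂ p⟫).re + ((⟪q, H₁ q⟫).re + (⟪q, H₂ q⟫).re) := by
    simp only [map_add, add_apply, inner_add_left, inner_add_right,
      Complex.add_re, Complex.zero_re, hvanish p hp, hH₁pq, inner_zero_right]
    ring
  have hpp := lamMin_mul_norm_sq_le (H₁ + H₂) p
  have hpq₂ := (abs_le.mp (abs_re_inner_apply_le H₂ p q)).1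
  have hqp₂ := (abs_le.mp (abs_re_inner_apply_le H₂ q p)).1
  have hqq₂ := (abs_le.mp (abs_re_inner_apply_le H₂ q q)).1
  simp only [RCLike.re_to_complex] at hpq₂ hqp₂ hqq₂
  linarith [hgap q hq]

lemma quadratic_bound_norm_starProjection_orthogonal [CompleteSpace ℋ]
    [S.HasOrthogonalProjection] (hS : S ≠ ⊥) (hH₁ : IsSelfAdjoint H₁) (hvanish : ∀ x ∈ S, H₁ x = 0) {J : ℝ}
    (hgap : ∀ x ∈ Sᗮ, J * ‖x‖ ^ 2 ≤ (⟪x, H₁ x⟫).re) {δ : ℝ} {ψ : ℋ} (hψ : ‖ψ‖ = 1)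
    (hlow : (⟪ψ, (H₁ + H₂) ψ⟫).re ≤ lamMin (H₁ + H₂) + δ) :
    (J - 2 * ‖H₂‖) * ‖Sᗮ.starProjection ψ‖ ^ 2 ≤ 2 * ‖H₂‖ * ‖Sᗮ.starProjection ψ‖ + δ := by
  set p := S.starProjection ψ
  set q := Sᗮ.starProjection ψ
  have hpyth : ‖p‖ ^ 2 + ‖q‖ ^ 2 = 1 := by
    rw [← S.norm_sq_eq_add_norm_sq_starProjection ψ, hψ, one_pow]
  have hlower := lamMin_mul_sq_sub_le_re_inner_add (H₂ := H₂) hH₁ hvanish hgap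
    (S.starProjection_apply_mem ψ) (Sᗮ.starProjection_apply_mem ψ)
  rw [S.starProjection_add_starProjection_orthogonal] at hlower
  have hlam := lamMin_add_le_norm (H₂ := H₂) hS hvanish
  have hp₁ : ‖p‖ ≤ 1 := by nlinarith [norm_nonneg p, norm_nonneg q]
  nlinarith [norm_nonneg q, norm_nonneg H₂, mul_le_mul_of_nonneg_right hp₁ (norm_nonneg q)]

end ProjectionLemma

theorem extended_projection_lemma_deviation_bound_general
    {ℋ : Type*} [NormedAddCommGroup ℋ] [InnerProductSpace ℂ ℋ] [FiniteDimensional ℂ ℋ]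
    (H₁ H₂ : ℋ →L[ℂ] ℋ) (hH₁ : IsSelfAdjoint H₁)
    (S : Submodule ℂ ℋ) (hS : S ≠ ⊥)
    (hvanish : ∀ x ∈ S, H₁ x = 0)
    (J : ℝ) (hgap : ∀ x ∈ Sᗮ, J * ‖x‖ ^ 2 ≤ (⟪x, H₁ x⟫).re)
    (K : ℝ) (hK : K = ‖H₂‖) (hJK : 2 * K < J)
    (δ : ℝ)
    (ψ : ℋ) (hψ : ‖ψ‖ = 1)
    (hlow : (⟪ψ, (H₁ + H₂) ψ⟫).re ≤ lamMin (H₁ + H₂) + δ) :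
    ∃ ψ' ∈ S, ‖ψ'‖ = 1 ∧
      1 - ((K + Real.sqrt (K ^ 2 + δ * (J - 2 * K))) / (J - 2 * K)) ^ 2 ≤ ‖⟪ψ, ψ'⟫‖ ^ 2 := by
  subst hK
  obtain ⟨φ, hφS, hφ, hφψ⟩ :=
    S.exists_mem_norm_eq_one_norm_inner_eq hS (S.starProjection_apply_mem ψ)
  refine ⟨φ, hφS, hφ, ?_⟩
  have hinner : ⟪ψ, φ⟫ = ⟪S.starProjection ψ, φ⟫ := by
    rw [S.inner_starProjection_left_eq_right, S.starProjection_eq_self_iff.mpr hφS]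
  have hdist := le_add_sqrt_div_of_mul_sq_le (sub_pos.mpr hJK)
    (quadratic_bound_norm_starProjection_orthogonal hS hH₁ hvanish hgap hψ hlow)
  have hpyth := S.norm_sq_eq_add_norm_sq_starProjection ψ
  rw [hψ, one_pow] at hpyth
  rw [hinner, hφψ]
  linarith [pow_le_pow_left₀ (norm_nonneg _) hdist 2]

/-- Extended Projection Lemma, ground state deviation bound: any low-energy state of
`H = H₁ + H₂` is close to a state in `S`. -/
theorem extended_projection_lemma_deviation_bound
    {ℋ : Type*} [NormedAddCommGroup ℋ] [InnerProductSpace ℂ ℋ] [FiniteDimensional ℂ ℋ]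
    (H₁ H₂ : ℋ →L[ℂ] ℋ) (hH₁ : IsSelfAdjoint H₁) (hH₂ : IsSelfAdjoint H₂)
    (S : Submodule ℂ ℋ) (hS : S ≠ ⊥)
    (hvanish : ∀ x ∈ S, H₁ x = 0)
    (J : ℝ) (hgap : ∀ x ∈ Sᗮ, J * ‖x‖ ^ 2 ≤ (⟪x, H₁ x⟫).re)
    (K : ℝ) (hK : K = ‖H₂‖) (hJK : 2 * K < J)
    (δ : ℝ) (hδ : 0 ≤ δ)
    (ψ : ℋ) (hψ : ‖ψ‖ = 1)
    (hlow : (⟪ψ, (H₁ + H₂) ψ⟫).re ≤ lamMin (H₁ + H₂) + δ) :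
    ∃ ψ' ∈ S, ‖ψ'‖ = 1 ∧
      1 - ((K + Real.sqrt (K ^ 2 + δ * (J - 2 * K))) / (J - 2 * K)) ^ 2 ≤ ‖⟪ψ, ψ'⟫‖ ^ 2 :=
  extended_projection_lemma_deviation_bound_general H₁ H₂ hH₁ S hS hvanish J hgap K hK hJK δ ψ hψ
    hlow
end

section
/- (Exchange inequality, core of the flag-qubit suboptimality lemma) Let m ≥ 1 be a natural number. For a bit string y : Fin m → Bool, let HW(y) denote the number of coordinates i with y i = true, and define C(y) := cos(√3 · HW(y) / (2m))². Let p : Fin m → ℝ satisfy 0 ≤ p i ≤ 1 for all i, and let ε assign to each index i : Fin m and each prefix z : Fin i → Bool a real number ε_i(z) with 0 ≤ ε_i(z) ≤ p i. For each y : Fin m → Bool define the weight q(y) := ∏_{i} t_i(y), where t_i(y) := p i − ε_i(y|_{<i}) if y i = true and t_i(y) := (1 − p i) + ε_i(y|_{<i}) if y i = false (y|_{<i} denotes the restriction of y to coordinates less than i), and define the product weight r(y) := ∏_i (p i if y i = true else 1 − p i). Let ε₀ := ε₀(·) be the value of ε at the first index with the empty prefix. Then ∑_{y : Fin m → Bool}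 q(y)·C(y) ≥ ∑_{y : Fin m → Bool} r(y)·C(y) + (3/(8m²))·ε₀. -/
/-!
Under `q` the `i`-th bit is `true` with conditional probability `p i - ε i (prefix) ≤ p i`, so `q`
is stochastically dominated by the product law `r`, and `E_q f ≥ E_r f` for every `f` that is
antitone in the bits. This follows by induction on `m`, splitting off the first bit. On the first
bit the two laws differ by exactly `ε₀` in the probability of `true`; if setting that bit lowers
`f` by at least `δ`, this gains a further `δ * ε₀`. For `f y = cos (√3 * HW y / (2m)) ^ 2` one can
take `δ = 3 / (8m²)`: `cos² a - cos² b = sin (a + b) * sin (b - a)`, with `sin (a + b) ≥ sin d`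
for the step `d = b - a = √3 / (2m)`, and `sin d ≥ 7d/8` because `d ≤ √3/2`.
-/

open Finset Real

def prefixBelow {α : Type*} {m : ℕ} (i : Fin m) (y : Fin m → α) : Fin i → α :=
  fun j => y (Fin.castLE i.isLt.le j)

theorem prefixBelow_succ_cons {α : Type*} {n : ℕ} (i : Fin n) (b : α) (y : Fin n → α) :
    prefixBelow i.succ (Fin.cons b y : Fin (n + 1) → α) = Fin.cons b (prefixBelow i y) := by
  ext j
  refine Fin.cases rfl (fun k => ?_) j
  exact (Fin.cons_succ (α := fun _ => α) b y (Fin.castLE i.isLt.le k)).trans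
    (Fin.cons_succ (α := fun _ => α) b (prefixBelow i y) k).symm

theorem monotone_cons {α : Type*} [Preorder α] {n : ℕ} (a : α) :
    Monotone (fun y : Fin n → α => (Fin.cons a y : Fin (n + 1) → α)) :=
  fun _ _ h => Fin.cons_le_cons.2 ⟨le_rfl, h⟩

def seqWeight {m : ℕ} (p : Fin m → ℝ) (ε : (i : Fin m) → (Fin i → Bool) → ℝ)
    (y : Fin m → Bool) : ℝ :=
  ∏ i, if y i then p i - ε i (prefixBelow i y) else 1 - p i + ε i (prefixBelow i y)

def tailEps {n : ℕ} (ε : (i : Fin (n + 1)) → (Fin i → Bool) → ℝ) (b : Bool) :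
    (i : Fin n) → (Fin i → Bool) → ℝ :=
  fun i z => ε i.succ (Fin.cons b z)

section Weights

variable {m : ℕ}

theorem seqWeight_nonneg {p : Fin m → ℝ} {ε : (i : Fin m) → (Fin i → Bool) → ℝ}
    (hp1 : ∀ i, p i ≤ 1) (hε0 : ∀ i z, 0 ≤ ε i z) (hεp : ∀ i z, ε i z ≤ p i)
    (y : Fin m → Bool) : 0 ≤ seqWeight p ε y := by
  refine prod_nonneg fun i _ => ?_
  split_ifs
  · linarith [hεp i (prefixBelow i y)]
  · linarith [hε0 i (prefixBelow i y), hp1 i]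

theorem seqWeight_zero (p : Fin m → ℝ) (y : Fin m → Bool) :
    seqWeight p 0 y = ∏ i, if y i then p i else 1 - p i := by
  simp [seqWeight]

theorem sum_seqWeight_zero (p : Fin m → ℝ) : ∑ y, seqWeight p 0 y = 1 := by
  simp only [seqWeight_zero]
  rw [← Fintype.prod_sum (fun i (b : Bool) => if b then p i else 1 - p i)]
  simp

end Weights

section Exchange

variable {n : ℕ}

theorem seqWeight_cons (p : Fin (n + 1) → ℝ) (ε : (i : Fin (n + 1)) → (Fin i → Bool) → ℝ)
    (b : Bool) (y : Fin n → Bool) :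
    seqWeight p ε (Fin.cons b y) =
      (if b then p 0 - ε 0 Fin.elim0 else 1 - p 0 + ε 0 Fin.elim0) *
        seqWeight (Fin.tail p) (tailEps ε b) y := by
  simp only [seqWeight, Fin.prod_univ_succ, Fin.cons_zero, Fin.cons_succ, prefixBelow_succ_cons]
  have hprefix : prefixBelow 0 (Fin.cons b y) = Fin.elim0 := funext fun j => Fin.elim0 j
  rw [hprefix]
  rfl

theorem sum_seqWeight_mul_eq (p : Fin (n + 1) → ℝ) (ε : (i : Fin (n + 1)) → (Fin i → Bool) → ℝ)
    (f : (Fin (n + 1) → Bool) → ℝ) :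
    ∑ y, seqWeight p ε y * f y =
      ∑ b : Bool, (if b then p 0 - ε 0 Fin.elim0 else 1 - p 0 + ε 0 Fin.elim0) *
        ∑ y, seqWeight (Fin.tail p) (tailEps ε b) y * f (Fin.cons b y) := by
  rw [← (Fin.consEquiv fun _ => Bool).sum_comp, Fintype.sum_prod_type]
  refine Fintype.sum_congr _ _ fun b => ?_
  rw [mul_sum]
  refine Fintype.sum_congr _ _ fun y => ?_
  rw [← mul_assoc, ← seqWeight_cons]
  rfl

theorem sum_seqWeight_mul_add_le_of_head {p : Fin (n + 1) → ℝ}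
    {ε : (i : Fin (n + 1)) → (Fin i → Bool) → ℝ} (hp0 : ∀ i, 0 ≤ p i) (hp1 : ∀ i, p i ≤ 1)
    (hε0 : ∀ i z, 0 ≤ ε i z) (hεp : ∀ i z, ε i z ≤ p i) {f : (Fin (n + 1) → Bool) → ℝ} {δ : ℝ}
    (hhead : ∀ y, f (Fin.cons true y) + δ ≤ f (Fin.cons false y))
    (htail : ∀ b, ∑ y, seqWeight (Fin.tail p) 0 y * f (Fin.cons b y) ≤
      ∑ y, seqWeight (Fin.tail p) (tailEps ε b) y * f (Fin.cons b y)) :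
    ∑ y, seqWeight p 0 y * f y + δ * ε 0 Fin.elim0 ≤ ∑ y, seqWeight p ε y * f y := by
  have htail_zero : ∀ b, tailEps (0 : (i : Fin (n + 1)) → (Fin i → Bool) → ℝ) b = 0 :=
    fun _ => rfl
  have hzero : (0 : (i : Fin (n + 1)) → (Fin i → Bool) → ℝ) 0 Fin.elim0 = 0 := rfl
  rw [sum_seqWeight_mul_eq p ε, sum_seqWeight_mul_eq p 0]
  simp only [Fintype.sum_bool, if_true, Bool.false_eq_true, if_false, htail_zero, hzero,
    sub_zero, add_zero]
  have hflip : ∑ y, seqWeight (Fin.tail p) 0 y * f (Fin.cons true y) + δ ≤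
      ∑ y, seqWeight (Fin.tail p) 0 y * f (Fin.cons false y) := by
    calc _ = ∑ y, seqWeight (Fin.tail p) 0 y * (f (Fin.cons true y) + δ) := by
          simp only [mul_add, sum_add_distrib, ← sum_mul, sum_seqWeight_zero, one_mul]
      _ ≤ _ := sum_le_sum fun y _ => mul_le_mul_of_nonneg_left (hhead y)
          (seqWeight_nonneg (fun i => hp1 i.succ) (fun _ _ => le_rfl) (fun i _ => hp0 i.succ) y)
  have htrue := mul_le_mul_of_nonneg_left (htail true) (sub_nonneg.2 (hεp 0 Fin.elim0))
  have hfalse := mul_le_mul_of_nonneg_left (htail false)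
    (by linarith [hp1 0, hε0 0 Fin.elim0] : 0 ≤ 1 - p 0 + ε 0 Fin.elim0)
  have hgain := mul_le_mul_of_nonneg_left hflip (hε0 0 Fin.elim0)
  linarith

end Exchange

theorem sum_seqWeight_zero_mul_le_of_antitone {m : ℕ} {p : Fin m → ℝ}
    {ε : (i : Fin m) → (Fin i → Bool) → ℝ} (hp0 : ∀ i, 0 ≤ p i) (hp1 : ∀ i, p i ≤ 1)
    (hε0 : ∀ i z, 0 ≤ ε i z) (hεp : ∀ i z, ε i z ≤ p i) {f : (Fin m → Bool) → ℝ}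
    (hf : Antitone f) :
    ∑ y, seqWeight p 0 y * f y ≤ ∑ y, seqWeight p ε y * f y := by
  induction m with
  | zero => simp [seqWeight]
  | succ n ih =>
    simpa using sum_seqWeight_mul_add_le_of_head (δ := 0) hp0 hp1 hε0 hεp
      (fun y => by simpa using hf (Fin.cons_le_cons.2 ⟨Bool.false_le true, le_rfl⟩))
      (fun b => ih (fun i => hp0 i.succ) (fun i => hp1 i.succ) (fun i _ => hε0 i.succ _)
        (fun i _ => hεp i.succ _) (hf.comp_monotone (monotone_cons b)))

theorem sum_seqWeight_zero_mul_add_le {n : ℕ} {p : Fin (n + 1) → ℝ}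
    {ε : (i : Fin (n + 1)) → (Fin i → Bool) → ℝ} (hp0 : ∀ i, 0 ≤ p i) (hp1 : ∀ i, p i ≤ 1)
    (hε0 : ∀ i z, 0 ≤ ε i z) (hεp : ∀ i z, ε i z ≤ p i) {f : (Fin (n + 1) → Bool) → ℝ} {δ : ℝ}
    (hf : Antitone f) (hhead : ∀ y, f (Fin.cons true y) + δ ≤ f (Fin.cons false y)) :
    ∑ y, seqWeight p 0 y * f y + δ * ε 0 Fin.elim0 ≤ ∑ y, seqWeight p ε y * f y :=
  sum_seqWeight_mul_add_le_of_head hp0 hp1 hε0 hεp hhead fun b =>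
    sum_seqWeight_zero_mul_le_of_antitone (fun i => hp0 i.succ) (fun i => hp1 i.succ)
      (fun i _ => hε0 i.succ _) (fun i _ => hεp i.succ _) (hf.comp_monotone (monotone_cons b))

theorem cos_sq_sub_cos_sq (a b : ℝ) : cos a ^ 2 - cos b ^ 2 = sin (b + a) * sin (b - a) := by
  rw [sin_add, sin_sub]
  linear_combination (-cos a ^ 2) * sin_sq_add_cos_sq b + cos b ^ 2 * sin_sq_add_cos_sq a

theorem sin_le_sin_of_le_of_le_pi_sub {d u : ℝ} (hd : 0 ≤ d) (hdu : d ≤ u) (hu : u ≤ π - d) :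
    sin d ≤ sin u := by
  rcases le_total u (π / 2) with h | h
  · exact sin_le_sin_of_le_of_le_pi_div_two (by linarith [pi_pos]) h hdu
  · rw [← sin_pi_sub u]
    exact sin_le_sin_of_le_of_le_pi_div_two (by linarith [pi_pos]) (by linarith) (by linarith)

theorem sqrt_three_lt_two : √3 < 2 := by
  rw [sqrt_lt' two_pos]
  norm_num

theorem cos_sq_sqrt_three_antitone {m j k : ℕ} (hjk : j ≤ k) (hkm : k ≤ m) :
    cos (√3 * k / (2 * m)) ^ 2 ≤ cos (√3 * j / (2 * m)) ^ 2 := by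
  rcases Nat.eq_zero_or_pos m with rfl | hm
  · simp
  have hm' : (0 : ℝ) < m := by exact_mod_cast hm
  have harg : √3 * k / (2 * m) ≤ π / 2 := by
    rw [div_le_div_iff₀ (by positivity) two_pos]
    have : (k : ℝ) ≤ m := by exact_mod_cast hkm
    nlinarith [sqrt_three_lt_two, pi_gt_three, sqrt_nonneg 3]
  have harg_nonneg : 0 ≤ √3 * k / (2 * m) := by positivity
  refine pow_le_pow_left₀ (cos_nonneg_of_mem_Icc ⟨by linarith [pi_pos], harg⟩) ?_ 2
  exact cos_le_cos_of_nonneg_of_le_pi (by positivity) (by linarith [pi_pos]) (by gcongr)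

theorem cos_sq_sqrt_three_succ_add_le {m k : ℕ} (hkm : k + 1 ≤ m) :
    cos (√3 * (k + 1 : ℕ) / (2 * m)) ^ 2 + 3 / (8 * m ^ 2) ≤ cos (√3 * k / (2 * m)) ^ 2 := by
  have hm : (1 : ℝ) ≤ m := by exact_mod_cast (Nat.succ_pos k).trans_le hkm
  have hk : (k : ℝ) + 1 ≤ m := by exact_mod_cast hkm
  set d := √3 / (2 * m) with hd_def
  have hd : 0 < d := by positivity
  have hd2 : d ^ 2 = 3 / (4 * m ^ 2) := by
    rw [hd_def, div_pow, sq_sqrt zero_le_three]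
    ring
  have hd2_le : d ^ 2 ≤ 3 / 4 := by
    rw [hd2]
    gcongr
    nlinarith
  have hsin_d : 7 / 8 * d ≤ sin d := by nlinarith [sin_gt_sub_cube hd]
  have hsin_u : sin d ≤ sin ((2 * k + 1) * d) := by
    refine sin_le_sin_of_le_of_le_pi_sub hd.le (by nlinarith [(k.cast_nonneg : (0 : ℝ) ≤ k)]) ?_
    have h2md : 2 * m * d = √3 := by
      rw [hd_def]
      field_simp
    nlinarith [sqrt_three_lt_two, pi_gt_three]
  have hdiff := cos_sq_sub_cos_sq (k * d) ((k + 1) * d)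
  rw [show (k + 1) * d + k * d = (2 * k + 1) * d by ring,
    show (k + 1) * d - k * d = d by ring] at hdiff
  have hgap : d ^ 2 / 2 ≤ sin ((2 * k + 1) * d) * sin d := by nlinarith
  rw [show √3 * k / (2 * m) = k * d by ring,
    show √3 * (k + 1 : ℕ) / (2 * m) = (k + 1) * d by push_cast; ring,
    show 3 / (8 * (m : ℝ) ^ 2) = d ^ 2 / 2 by rw [hd2]; ring]
  linarith

/-- Exchange inequality (core of the flag-qubit suboptimality lemma).
`q y` is the probability weight of outcome string `y` under the (possibly entangled) proof,
built from conditional acceptance probabilities `p i − ε i (prefix)`, while `r y` is the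
weight under the optimal product proof. The weighted sum of
`C(y) = cos(√3·HW(y)/(2m))²` under `q` exceeds that under `r` by at least `(3/(8m²))·ε₀`. -/
theorem flag_qubit_exchange_inequality (m : ℕ) (hm : 1 ≤ m)
    (p : Fin m → ℝ) (hp0 : ∀ i, 0 ≤ p i) (hp1 : ∀ i, p i ≤ 1)
    (ε : (i : Fin m) → ((Fin (i : ℕ) → Bool) → ℝ))
    (hε0 : ∀ i z, 0 ≤ ε i z) (hεp : ∀ i z, ε i z ≤ p i) :
    (∑ y : Fin m → Bool,
        (∏ i : Fin m, (if y i then p i - ε i (fun j => y ⟨(j : ℕ), lt_trans j.isLt i.isLt⟩)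
            else (1 - p i) + ε i (fun j => y ⟨(j : ℕ), lt_trans j.isLt i.isLt⟩))) *
          Real.cos (Real.sqrt 3 * ((Finset.univ.filter fun i => y i = true).card : ℝ)
              / (2 * (m : ℝ))) ^ 2)
      ≥
    (∑ y : Fin m → Bool,
        (∏ i : Fin m, (if y i then p i else 1 - p i)) *
          Real.cos (Real.sqrt 3 * ((Finset.univ.filter fun i => y i = true).card : ℝ)
              / (2 * (m : ℝ))) ^ 2)
      + (3 / (8 * (m : ℝ) ^ 2)) * ε ⟨0, hm⟩ (fun j => j.elim0) := by
  obtain ⟨n, rfl⟩ := Nat.exists_eq_add_of_le' hm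
  have hweight_mono : Monotone fun y : Fin (n + 1) → Bool => #{i | y i = true} :=
    fun _ _ h => card_le_card (monotone_filter_right _ fun i _ => h i)
  have hf : Antitone fun y : Fin (n + 1) → Bool =>
      cos (√3 * (#{i | y i = true} : ℕ) / (2 * (n + 1 : ℕ))) ^ 2 :=
    fun _ _ h => cos_sq_sqrt_three_antitone (hweight_mono h)
      ((card_filter_le _ _).trans_eq (card_fin _))
  have hhead (y : Fin n → Bool) :
      cos (√3 * (#{i | (Fin.cons true y : Fin (n + 1) → Bool) i = true} : ℕ) /
          (2 * (n + 1 : ℕ))) ^ 2 + 3 / (8 * ((n + 1 : ℕ) : ℝ) ^ 2) ≤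
        cos (√3 * (#{i | (Fin.cons false y : Fin (n + 1) → Bool) i = true} : ℕ) /
          (2 * (n + 1 : ℕ))) ^ 2 := by
    simp only [Fin.card_filter_univ_succ', Fin.cons_zero, Fin.cons_succ, if_true,
      Bool.false_eq_true, if_false, zero_add]
    rw [add_comm 1]
    exact cos_sq_sqrt_three_succ_add_le
      (Nat.succ_le_succ ((card_filter_le _ _).trans_eq (card_fin n)))
  have key := sum_seqWeight_zero_mul_add_le hp0 hp1 hε0 hεp hf hhead
  simp only [seqWeight_zero] at key
  exact key
end
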